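/- Let F and B be n × n column-stochastic matrices, let 0 < α₁, α₂, α₃ < 1, and for d ∈ ℝⁿ let R(d) denote the unique solution t of the RepRank equation t = α₁ F P₊(t) + α₂ B P₋(t) + α₃ d. Then R is a bijection from ℝⁿ onto ℝⁿ. -/

import Mathlib

/-!
Set `G t = t - α₁ F P₊(t) - α₂ B P₋(t)`, so that the RepRank equation says `G (R d) = α₃ d`;
it suffices that `G` is injective. If `G t = G s`, then
`t - s = α₁ F (P₊t - P₊s) + α₂ B (P₋t - P₋s)`. Column-stochastic matrices do not increase the
ℓ¹ norm, so `‖t - s‖₁ ≤ α₁ a + α₂ b` with `a = ‖P₊t - P₊s‖₁` and `b = ‖P₋t - P₋s‖₁`. Since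
`P₊` and `P₋` are monotone and sum to the identity, `a + b = ‖t - s‖₁`; as `α₁, α₂ < 1`,
this forces `a = b = 0`.
-/

open Finset Filter

/-- Replace negative components by zero. -/
def Ppos {n : ℕ} (t : Fin n → ℝ) : Fin n → ℝ := fun i => max (t i) 0

/-- Replace positive components by zero. -/
def Pneg {n : ℕ} (t : Fin n → ℝ) : Fin n → ℝ := fun i => min (t i) 0

/-- ℓ¹ norm on ℝⁿ. -/
def l1 {n : ℕ} (x : Fin n → ℝ) : ℝ := ∑ i, |x i|

/-- A matrix is column-stochastic if entries are nonnegative and each column sums to 1. -/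
def ColStochastic {n : ℕ} (F : Matrix (Fin n) (Fin n) ℝ) : Prop :=
  (∀ i j, 0 ≤ F i j) ∧ ∀ j, ∑ i, F i j = 1

lemma abs_max_sub_max_add_abs_min_sub_min (a b : ℝ) :
    |max a 0 - max b 0| + |min a 0 - min b 0| = |a - b| := by
  wlog hba : b ≤ a generalizing a b
  · rw [abs_sub_comm, abs_sub_comm (min a 0), abs_sub_comm a]
    exact this b a (le_of_not_ge hba)
  rw [abs_of_nonneg (sub_nonneg.2 (max_le_max_right 0 hba)),
    abs_of_nonneg (sub_nonneg.2 (min_le_min_right 0 hba)), abs_of_nonneg (sub_nonneg.2 hba)]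
  linarith [min_add_max a 0, min_add_max b 0]

section l1

variable {n : ℕ}

lemma l1_nonneg (x : Fin n → ℝ) : 0 ≤ l1 x :=
  sum_nonneg fun _ _ => abs_nonneg _

lemma l1_eq_zero_iff {x : Fin n → ℝ} : l1 x = 0 ↔ x = 0 := by
  simp only [l1, sum_eq_zero_iff_of_nonneg fun i _ => abs_nonneg (x i), mem_univ,
    true_implies, abs_eq_zero, funext_iff, Pi.zero_apply]

lemma l1_add_le (x y : Fin n → ℝ) : l1 (x + y) ≤ l1 x + l1 y := by
  rw [l1, l1, l1, ← sum_add_distrib]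
  exact sum_le_sum fun i _ => abs_add_le (x i) (y i)

lemma l1_smul (c : ℝ) (x : Fin n → ℝ) : l1 (c • x) = |c| * l1 x := by
  simp only [l1, Pi.smul_apply, smul_eq_mul, abs_mul, mul_sum]

lemma l1_Ppos_sub_add_l1_Pneg_sub (t s : Fin n → ℝ) :
    l1 (Ppos t - Ppos s) + l1 (Pneg t - Pneg s) = l1 (t - s) := by
  rw [l1, l1, l1, ← sum_add_distrib]
  exact sum_congr rfl fun i _ => abs_max_sub_max_add_abs_min_sub_min (t i) (s i)

lemma ColStochastic.l1_mulVec_le {F : Matrix (Fin n) (Fin n) ℝ} (hF : ColStochastic F)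
    (x : Fin n → ℝ) : l1 (F.mulVec x) ≤ l1 x :=
  calc l1 (F.mulVec x) = ∑ i, |∑ j, F i j * x j| := rfl
    _ ≤ ∑ i, ∑ j, F i j * |x j| := by
        refine sum_le_sum fun i _ => (abs_sum_le_sum_abs _ _).trans_eq ?_
        simp only [abs_mul, abs_of_nonneg (hF.1 i _)]
    _ = ∑ j, (∑ i, F i j) * |x j| := by
        rw [sum_comm]
        simp only [sum_mul]
    _ = l1 x := by simp only [hF.2, one_mul, l1]

end l1

section repRankMap

variable {n : ℕ} (F B : Matrix (Fin n) (Fin n) ℝ) (α₁ α₂ : ℝ)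

def repRankMap (t : Fin n → ℝ) : Fin n → ℝ :=
  t - α₁ • F.mulVec (Ppos t) - α₂ • B.mulVec (Pneg t)

variable {F B α₁ α₂}

lemma l1_sub_le_of_repRankMap_eq (hF : ColStochastic F) (hB : ColStochastic B)
    (hα₁ : 0 ≤ α₁) (hα₂ : 0 ≤ α₂) {t s : Fin n → ℝ}
    (h : repRankMap F B α₁ α₂ t = repRankMap F B α₁ α₂ s) :
    l1 (t - s) ≤ α₁ * l1 (Ppos t - Ppos s) + α₂ * l1 (Pneg t - Pneg s) := by
  have hts : t - s = α₁ • F.mulVec (Ppos t - Ppos s) + α₂ • B.mulVec (Pneg t - Pneg s) := by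
    rw [repRankMap, repRankMap] at h
    rw [Matrix.mulVec_sub, Matrix.mulVec_sub]
    linear_combination (norm := module) h
  calc l1 (t - s)
      ≤ l1 (α₁ • F.mulVec (Ppos t - Ppos s)) + l1 (α₂ • B.mulVec (Pneg t - Pneg s)) :=
        hts ▸ l1_add_le _ _
    _ = α₁ * l1 (F.mulVec (Ppos t - Ppos s)) + α₂ * l1 (B.mulVec (Pneg t - Pneg s)) := by
        rw [l1_smul, l1_smul, abs_of_nonneg hα₁, abs_of_nonneg hα₂]
    _ ≤ α₁ * l1 (Ppos t - Ppos s) + α₂ * l1 (Pneg t - Pneg s) := by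
        gcongr
        exacts [hF.l1_mulVec_le _, hB.l1_mulVec_le _]

lemma repRankMap_injective (hF : ColStochastic F) (hB : ColStochastic B)
    (hα₁ : 0 ≤ α₁) (hα₁' : α₁ < 1) (hα₂ : 0 ≤ α₂) (hα₂' : α₂ < 1) :
    Function.Injective (repRankMap F B α₁ α₂) := by
  intro t s h
  have hle := l1_sub_le_of_repRankMap_eq hF hB hα₁ hα₂ h
  rw [← l1_Ppos_sub_add_l1_Pneg_sub] at hle
  have ha := l1_nonneg (Ppos t - Ppos s)
  have hb := l1_nonneg (Pneg t - Pneg s)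
  have ha0 : l1 (Ppos t - Ppos s) = 0 := by nlinarith
  have hb0 : l1 (Pneg t - Pneg s) = 0 := by nlinarith
  rw [← sub_eq_zero, ← l1_eq_zero_iff, ← l1_Ppos_sub_add_l1_Pneg_sub, ha0, hb0, add_zero]

end repRankMap

theorem repRank_bijective_general {n : ℕ} (F B : Matrix (Fin n) (Fin n) ℝ)
    (hF : ColStochastic F) (hB : ColStochastic B)
    (α₁ α₂ α₃ : ℝ) (hα₁ : 0 < α₁) (hα₁' : α₁ < 1) (hα₂ : 0 < α₂) (hα₂' : α₂ < 1)
    (hα₃ : 0 < α₃)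
    (R : (Fin n → ℝ) → (Fin n → ℝ))
    (hR : ∀ d, R d = α₁ • F.mulVec (Ppos (R d)) + α₂ • B.mulVec (Pneg (R d)) + α₃ • d) :
    Function.Bijective R := by
  have hRank : ∀ d, repRankMap F B α₁ α₂ (R d) = α₃ • d := fun d => by
    rw [repRankMap, sub_sub, sub_eq_iff_eq_add']
    exact hR d
  have hinj := repRankMap_injective hF hB hα₁.le hα₁' hα₂.le hα₂'
  refine ⟨fun d d' h => smul_right_injective _ hα₃.ne' ?_,
    fun t => ⟨α₃⁻¹ • repRankMap F B α₁ α₂ t, ?_⟩⟩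
  · simp only [← hRank, h]
  · exact hinj (by rw [hRank, smul_inv_smul₀ hα₃.ne'])

theorem repRank_bijective {n : ℕ} (F B : Matrix (Fin n) (Fin n) ℝ)
    (hF : ColStochastic F) (hB : ColStochastic B)
    (α₁ α₂ α₃ : ℝ) (hα₁ : 0 < α₁) (hα₁' : α₁ < 1) (hα₂ : 0 < α₂) (hα₂' : α₂ < 1)
    (hα₃ : 0 < α₃) (hα₃' : α₃ < 1)
    (R : (Fin n → ℝ) → (Fin n → ℝ))
    (hR : ∀ d, R d = α₁ • F.mulVec (Ppos (R d)) + α₂ • B.mulVec (Pneg (R d)) + α₃ • d) :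
    Function.Bijective R :=
  repRank_bijective_general F B hF hB α₁ α₂ α₃ hα₁ hα₁' hα₂ hα₂' hα₃ R hR
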